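/- arXiv:1803.01596 — 2 statements merged into one kernel-verified Lean document; each statement's English description precedes it below -/
import Mathlib

section
/- (Ruler-and-compass construction of the harmonic conjugate.) Let B, C, D be pairwise distinct collinear points of ℝ². Let b and c be points not on line BC such that b, D, c are collinear, D is the midpoint of b and c, and the line bc is not parallel to line BC. Suppose the lines bB and cC meet in a point K not on line BC, and let F be the intersection point of line BC with the line through K parallel to line bc. Then F is distinct from B, C, D, and the four points B, C, D, F form a harmonic range with pairs {B,C} and {D,F}. -/
noncomputable section

open EuclideanGeometry

abbrev Pt : Type := EuclideanSpace ℝ (Fin 2)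

/-- The affine line through two points of the Euclidean plane. -/
def lineThrough (x y : Pt) : AffineSubspace ℝ Pt := affineSpan ℝ {x, y}

/-- A subset of the plane is a line if it is the affine span of two distinct points. -/
def IsLine (s : AffineSubspace ℝ Pt) : Prop := ∃ x y : Pt, x ≠ y ∧ s = lineThrough x y

lemma mem_lineThrough_iff {x y p : Pt} : p ∈ lineThrough x y ↔ ∃ r : ℝ, r • (y - x) = p - x := by
  have h := vadd_left_mem_affineSpan_pair (k := ℝ) (p₁ := x) (p₂ := y) (v := p - x)
  simpa [lineThrough, vsub_eq_sub, vadd_eq_add, sub_add_cancel] using h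

/-- Ruler-and-compass construction of the harmonic conjugate. -/
theorem harmonic_conjugate_construction
    (B C D : Pt)
    (hBC : B ≠ C) (hBD : B ≠ D) (hCD : C ≠ D)
    (hcol : Collinear ℝ ({B, C, D} : Set Pt))
    (b c : Pt)
    (hb : b ∉ lineThrough B C) (hc : c ∉ lineThrough B C)
    (hbDc : Collinear ℝ ({b, D, c} : Set Pt))
    (hmid : D = midpoint ℝ b c)
    (hnpar : ¬ AffineSubspace.Parallel (lineThrough b c) (lineThrough B C))
    (K : Pt) (hK1 : K ∈ lineThrough b B) (hK2 : K ∈ lineThrough c C)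
    (hK3 : K ∉ lineThrough B C)
    (F : Pt) (hF1 : F ∈ lineThrough B C)
    (hF2 : F ∈ AffineSubspace.mk' K (lineThrough b c).direction) :
    F ≠ B ∧ F ≠ C ∧ F ≠ D ∧
      ∃ r s : ℝ, B - D = r • (C - D) ∧ B - F = s • (C - F) ∧ r = -s := by
  have hu0 : C - B ≠ 0 := sub_ne_zero.mpr (Ne.symm hBC)
  -- D lies on line BC
  have hDmem : D ∈ lineThrough B C :=
    hcol.mem_affineSpan_of_mem_of_ne (by simp) (by simp) (by simp) hBC
  obtain ⟨d, hd⟩ := mem_lineThrough_iff.mp hDmem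
  have hd0 : d ≠ 0 := by
    intro h; apply hBD
    have : (0 : Pt) = D - B := by simpa [h] using hd
    have := this.symm
    rw [sub_eq_zero] at this; exact this.symm
  have hd1 : d ≠ 1 := by
    intro h; apply hCD
    have : C - B = D - B := by simpa [h] using hd
    have := sub_left_injective this
    exact this
  -- linear independence of C - B and b - D
  have hindep : ∀ a e : ℝ, a • (C - B) + e • (b - D) = 0 → a = 0 ∧ e = 0 := by
    intro a e h
    by_cases he : e = 0
    · subst he
      simp only [zero_smul, add_zero] at h
      rcases smul_eq_zero.mp h with ha | hu
      · exact ⟨ha, rfl⟩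
      · exact absurd hu hu0
    · exfalso
      have h' : e • (b - D) = (-a) • (C - B) := by
        linear_combination (norm := module) h
      have hveq : b - D = (-(a/e)) • (C - B) := by
        calc b - D = (e⁻¹ * e) • (b - D) := by rw [inv_mul_cancel₀ he, one_smul]
          _ = e⁻¹ • (e • (b - D)) := by rw [mul_smul]
          _ = e⁻¹ • ((-a) • (C - B)) := by rw [h']
          _ = (-(a/e)) • (C - B) := by rw [smul_smul]; congr 1; field_simp
      apply hb
      rw [mem_lineThrough_iff]
      refine ⟨d - a/e, ?_⟩
      have : (d - a/e) • (C - B) = d • (C - B) + (-(a/e)) • (C - B) := by module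
      rw [this, hd, ← hveq]; abel
  -- c in terms of b and D
  have hcD : c - D = -(b - D) := by
    rw [hmid, midpoint_eq_smul_add, invOf_eq_inv]; module
  -- the intersection data
  obtain ⟨s, hs⟩ := mem_lineThrough_iff.mp hK1
  obtain ⟨t, ht⟩ := mem_lineThrough_iff.mp hK2
  obtain ⟨f, hf⟩ := mem_lineThrough_iff.mp hF1
  have hF2' : ∃ m : ℝ, m • (b - c) = F - K := by
    have h := AffineSubspace.mem_mk'.mp hF2
    rw [lineThrough, direction_affineSpan] at h
    rw [show F -ᵥ K = F - K from rfl] at h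
    exact mem_vectorSpan_pair.mp h
  obtain ⟨m, hm⟩ := hF2'
  -- express things in the (C-B, b-D) frame
  have hbB : b - B = d • (C - B) + (1 : ℝ) • (b - D) := by
    linear_combination (norm := module) -hd
  have hcB : c - B = d • (C - B) + (-1 : ℝ) • (b - D) := by
    linear_combination (norm := module) hcD - hd
  have hKB1 : K - B = ((1 - s) * d) • (C - B) + (1 - s) • (b - D) := by
    have h1 : K - B = (1 - s) • (b - B) := by
      linear_combination (norm := module) -hs
    rw [h1, hbB]
    module
  have hKB2 : K - B = (d + t * (1 - d)) • (C - B) + (t - 1) • (b - D) := by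
    have h1 : K - B = t • (C - B) + (1 - t) • (c - B) := by
      linear_combination (norm := module) -ht
    rw [h1, hcB]
    module
  have hbc : b - c = (2 : ℝ) • (b - D) := by
    linear_combination (norm := module) -hcD
  have E1 : ((1 - s) * d - (d + t * (1 - d))) • (C - B)
      + ((1 - s) - (t - 1)) • (b - D) = 0 := by
    linear_combination (norm := module) hKB2 - hKB1
  have E2 : (f - (1 - s) * d) • (C - B) + (-(1 - s) - 2 * m) • (b - D) = 0 := by
    have h1 : f • (C - B) - m • (b - c) = K - B := by
      linear_combination (norm := module) hf - hm
    rw [hbc, hKB1] at h1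
    linear_combination (norm := module) h1
  obtain ⟨e1a, e1b⟩ := hindep _ _ E1
  obtain ⟨e2a, e2b⟩ := hindep _ _ E2
  -- scalar algebra
  have hσ : (1 - s) * (2 * d - 1) = 1 := by linear_combination e1a + (d - 1) * e1b
  have h2d : 2 * d - 1 ≠ 0 := by
    intro h; rw [h, mul_zero] at hσ; exact one_ne_zero hσ.symm
  have hs1 : (1 : ℝ) - s ≠ 0 := by
    intro h; rw [h, zero_mul] at hσ; exact one_ne_zero hσ.symm
  have hsne : s ≠ 0 := by
    intro h; apply hd1; rw [h] at hσ; linarith [hσ]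
  have hfval : f = (1 - s) * d := by linarith [e2a]
  have hf0 : f ≠ 0 := by
    rw [hfval]; exact mul_ne_zero hs1 hd0
  have hf1 : f - 1 ≠ 0 := by
    have : f - 1 = (1 - s) * (1 - d) := by
      rw [hfval]; linear_combination hσ
    rw [this]
    exact mul_ne_zero hs1 (by intro h; apply hd1; linarith)
  have hfd : f - d ≠ 0 := by
    have : f - d = -s * d := by rw [hfval]; ring
    rw [this]
    exact mul_ne_zero (neg_ne_zero.mpr hsne) hd0
  refine ⟨?_, ?_, ?_, ?_⟩
  · intro h
    rw [h, sub_self] at hf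
    rcases smul_eq_zero.mp hf with h' | h'
    · exact hf0 h'
    · exact hu0 h'
  · intro h
    have : (f - 1) • (C - B) = 0 := by
      have h2 : (f - 1) • (C - B) = f • (C - B) - (C - B) := by module
      rw [h2, hf, h]; abel
    rcases smul_eq_zero.mp this with h' | h'
    · exact hf1 h'
    · exact hu0 h'
  · intro h
    have : (f - d) • (C - B) = 0 := by
      have h2 : (f - d) • (C - B) = f • (C - B) - d • (C - B) := by module
      rw [h2, hf, hd, h]; abel
    rcases smul_eq_zero.mp this with h' | h'
    · exact hfd h'
    · exact hu0 h'
  · have hd1' : d - 1 ≠ 0 := sub_ne_zero.mpr hd1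
    have h1d : (1 : ℝ) - d ≠ 0 := fun h => hd1 (by linarith)
    refine ⟨d / (d - 1), d / (1 - d), ?_, ?_, ?_⟩
    · have k1 : (d / (d - 1)) * (1 - d) = -d := by field_simp; ring
      have hCD' : C - D = (1 - d) • (C - B) := by
        linear_combination (norm := module) hd
      have hBD' : B - D = (-d) • (C - B) := by
        linear_combination (norm := module) hd
      rw [hBD', hCD', smul_smul, k1]
    · have hfk : f * (2 * d - 1) = d := by
        linear_combination (2 * d - 1) * e2a + d * hσ
      have k2 : (d / (1 - d)) * (1 - f) = -f := by
        rw [div_mul_eq_mul_div, div_eq_iff h1d]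
        linear_combination -hfk
      have hCF : C - F = (1 - f) • (C - B) := by
        linear_combination (norm := module) hf
      have hBF : B - F = (-f) • (C - B) := by
        linear_combination (norm := module) hf
      rw [hBF, hCF, smul_smul, k2]
    · field_simp
      ring
end
end

section
/- (Desargues' involution theorem for the complete quadrangle.) Let B, C, D, E be a complete quadrangle in ℝ². Let Δ be a line that is not parallel to any of the six side lines BC, DE, BE, CD, BD, CE and does not pass through any point of pairwise intersection of these six lines (in particular not through B, C, D, E). Let I = Δ∩BC, K = Δ∩DE, P = Δ∩BE, Q = Δ∩CD, G = Δ∩BD, H = Δ∩CE. Then QI·QK·PG·PH = PI·PK·QG·QH; that is, the three couples (I,K), (P,Q), (G,H) are in involution on Δ. -/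
noncomputable section

open EuclideanGeometry

/-- The six side lines of a complete quadrangle B, C, D, E. -/
def sides (B C D E : Pt) : Set (AffineSubspace ℝ Pt) :=
  {lineThrough B C, lineThrough D E, lineThrough B E,
   lineThrough C D, lineThrough B D, lineThrough C E}

/-! Parametrize Δ as `x + t • v`; the side `UV` meets it at
`t = cross (U - x) (V - x) / cross v (V - U)`. For two sides `UV`, `UW` through a common vertex,
the difference of the two parameters is the height `cross v (U - x)` of `U` over Δ times the area
`cross (W - U) (V - U)` of `UVW`, divided by the two denominators. Each side of the involution
identity is a product of four such differences, one at each vertex. Both products involve the same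
four heights, the same four triangle areas and the same denominators; only orientations differ, in
an even number of factors. -/

def cross (a b : Pt) : ℝ := a 0 * b 1 - a 1 * b 0

lemma cross_sub_comm (v U V : Pt) : cross v (U - V) = -cross v (V - U) := by
  simp only [cross, PiLp.sub_apply]; ring

lemma cross_sub_sub_swap (U V W : Pt) : cross (W - U) (V - U) = -cross (W - V) (U - V) := by
  simp only [cross, PiLp.sub_apply]; ring

lemma sq_add_sq_ne_zero {a : Pt} (ha : a ≠ 0) : a 0 ^ 2 + a 1 ^ 2 ≠ 0 := by
  have h := EuclideanSpace.norm_sq_eq a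
  simp only [Fin.sum_univ_two, Real.norm_eq_abs, sq_abs] at h
  rw [← h]
  exact pow_ne_zero 2 (norm_ne_zero_iff.mpr ha)

lemma exists_eq_smul_of_cross_eq_zero {a b : Pt} (ha : a ≠ 0) (h : cross a b = 0) :
    ∃ k : ℝ, b = k • a := by
  refine ⟨(a 0 * b 0 + a 1 * b 1) / (a 0 ^ 2 + a 1 ^ 2), ?_⟩
  have hn := sq_add_sq_ne_zero ha
  unfold cross at h
  ext i
  fin_cases i <;> simp only [Fin.zero_eta, Fin.mk_one, PiLp.smul_apply, smul_eq_mul] <;>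
    field_simp
  · linear_combination -a 1 * h
  · linear_combination a 0 * h

lemma parallel_of_cross_eq_zero {x y U V : Pt} (hxy : x ≠ y) (hUV : U ≠ V)
    (h : cross (y - x) (V - U) = 0) : (lineThrough x y).Parallel (lineThrough U V) := by
  rw [lineThrough, lineThrough, AffineSubspace.affineSpan_pair_parallel_iff_vectorSpan_eq,
    vectorSpan_pair, vectorSpan_pair, vsub_eq_sub, vsub_eq_sub]
  have h' : cross (x - y) (U - V) = 0 := by
    rw [← h]; simp only [cross, PiLp.sub_apply]; ring
  obtain ⟨k, hk⟩ := exists_eq_smul_of_cross_eq_zero (sub_ne_zero.mpr hxy) h'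
  have hk0 : k ≠ 0 := by
    rintro rfl
    rw [zero_smul, sub_eq_zero] at hk
    exact hUV hk
  rw [hk, Submodule.span_singleton_smul_eq (IsUnit.mk0 k hk0)]

lemma cross_sub_eq_zero_of_mem_lineThrough {U V Z : Pt} (hZ : Z ∈ lineThrough U V) :
    cross (Z - U) (V - U) = 0 := by
  obtain ⟨r, rfl⟩ := mem_affineSpan_pair_iff_exists_lineMap_eq.mp hZ
  simp only [cross, AffineMap.lineMap_apply, vsub_eq_sub, vadd_eq_add, PiLp.sub_apply,
    PiLp.add_apply, PiLp.smul_apply, smul_eq_mul]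
  ring

def lineParam (x v U V : Pt) : ℝ := cross (U - x) (V - x) / cross v (V - U)

lemma lineParam_comm (x v U V : Pt) : lineParam x v U V = lineParam x v V U := by
  rw [lineParam, lineParam, cross_sub_comm v U V, div_neg, ← neg_div]
  congr 1
  simp only [cross, PiLp.sub_apply]; ring

lemma eq_lineMap_lineParam {x y U V Z : Pt} (h : cross (y - x) (V - U) ≠ 0)
    (hZΔ : Z ∈ lineThrough x y) (hZ : Z ∈ lineThrough U V) :
    Z = AffineMap.lineMap x y (lineParam x (y - x) U V) := by
  obtain ⟨t, rfl⟩ := mem_affineSpan_pair_iff_exists_lineMap_eq.mp hZΔ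
  have hcross := cross_sub_eq_zero_of_mem_lineThrough hZ
  congr 1
  rw [lineParam, eq_div_iff h]
  simp only [cross, AffineMap.lineMap_apply, vsub_eq_sub, vadd_eq_add, PiLp.sub_apply,
    PiLp.add_apply, PiLp.smul_apply, smul_eq_mul] at hcross ⊢
  linear_combination hcross

lemma lineParam_sub_lineParam (x v U V W : Pt) (hV : cross v (V - U) ≠ 0)
    (hW : cross v (W - U) ≠ 0) :
    lineParam x v U V - lineParam x v U W
      = cross v (U - x) * cross (W - U) (V - U) / (cross v (V - U) * cross v (W - U)) := by
  rw [lineParam, lineParam, div_sub_div _ _ hV hW]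
  congr 1
  simp only [cross, PiLp.sub_apply]; ring

lemma lineParam_involution (x v B C D E : Pt)
    (hBC : cross v (C - B) ≠ 0) (hDE : cross v (E - D) ≠ 0) (hBE : cross v (E - B) ≠ 0)
    (hCD : cross v (D - C) ≠ 0) (hBD : cross v (D - B) ≠ 0) (hCE : cross v (E - C) ≠ 0) :
    let t := lineParam x v
    (t C D - t B C) * (t C D - t D E) * (t B E - t B D) * (t B E - t C E)
      = (t B E - t B C) * (t B E - t D E) * (t C D - t B D) * (t C D - t C E) := by
  dsimp only
  have flip {U V : Pt} (h : cross v (V - U) ≠ 0) : cross v (U - V) ≠ 0 := by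
    rwa [cross_sub_comm, neg_ne_zero]
  have hC₁ := lineParam_sub_lineParam x v C D B hCD (flip hBC)
  have hD₁ := lineParam_sub_lineParam x v D C E (flip hCD) hDE
  have hB₁ := lineParam_sub_lineParam x v B E D hBE hBD
  have hE₁ := lineParam_sub_lineParam x v E B C (flip hBE) (flip hCE)
  have hB₂ := lineParam_sub_lineParam x v B E C hBE hBC
  have hE₂ := lineParam_sub_lineParam x v E B D (flip hBE) (flip hDE)
  have hD₂ := lineParam_sub_lineParam x v D C B (flip hCD) (flip hBD)
  have hC₂ := lineParam_sub_lineParam x v C D E hCD hCE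
  rw [lineParam_comm x v C B] at hC₁
  rw [lineParam_comm x v D C] at hD₁ hD₂
  rw [lineParam_comm x v E B, lineParam_comm x v E C] at hE₁
  rw [lineParam_comm x v E B, lineParam_comm x v E D] at hE₂
  rw [lineParam_comm x v D B] at hD₂
  rw [hC₁, hD₁, hB₁, hE₁, hB₂, hE₂, hD₂, hC₂, cross_sub_sub_swap C D B, cross_sub_sub_swap D C E,
    cross_sub_sub_swap B E D, cross_sub_sub_swap E B C, cross_sub_comm v B C,
    cross_sub_comm v E D, cross_sub_comm v D B, cross_sub_comm v C E]
  ring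

theorem desargues_involution_quadrangle_general
    (B C D E : Pt)
    (hBCD : ¬ Collinear ℝ ({B, C, D} : Set Pt))
    (hBCE : ¬ Collinear ℝ ({B, C, E} : Set Pt))
    (hBDE : ¬ Collinear ℝ ({B, D, E} : Set Pt))
    (Δ : AffineSubspace ℝ Pt) (hΔ : IsLine Δ)
    (hnpar : ∀ s ∈ sides B C D E, ¬ AffineSubspace.Parallel Δ s)
    (I K P Q G H : Pt)
    (hI : I ∈ Δ ∧ I ∈ lineThrough B C)
    (hK : K ∈ Δ ∧ K ∈ lineThrough D E)
    (hP : P ∈ Δ ∧ P ∈ lineThrough B E)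
    (hQ : Q ∈ Δ ∧ Q ∈ lineThrough C D)
    (hG : G ∈ Δ ∧ G ∈ lineThrough B D)
    (hH : H ∈ Δ ∧ H ∈ lineThrough C E) :
    dist Q I * dist Q K * dist P G * dist P H
      = dist P I * dist P K * dist Q G * dist Q H := by
  obtain ⟨x, y, hxy, rfl⟩ := hΔ
  have hcross {U V : Pt} (hUV : U ≠ V) (hs : lineThrough U V ∈ sides B C D E) :
      cross (y - x) (V - U) ≠ 0 :=
    fun h => hnpar _ hs (parallel_of_cross_eq_zero hxy hUV h)
  have hBC := hcross (ne₁₂_of_not_collinear hBCD) (by simp [sides])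
  have hDE := hcross (ne₂₃_of_not_collinear hBDE) (by simp [sides])
  have hBE := hcross (ne₁₃_of_not_collinear hBDE) (by simp [sides])
  have hCD := hcross (ne₂₃_of_not_collinear hBCD) (by simp [sides])
  have hBD := hcross (ne₁₃_of_not_collinear hBCD) (by simp [sides])
  have hCE := hcross (ne₂₃_of_not_collinear hBCE) (by simp [sides])
  rw [eq_lineMap_lineParam hBC hI.1 hI.2, eq_lineMap_lineParam hDE hK.1 hK.2,
    eq_lineMap_lineParam hBE hP.1 hP.2, eq_lineMap_lineParam hCD hQ.1 hQ.2,
    eq_lineMap_lineParam hBD hG.1 hG.2, eq_lineMap_lineParam hCE hH.1 hH.2]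
  simp only [dist_lineMap_lineMap, Real.dist_eq]
  have key := congrArg abs (lineParam_involution x (y - x) B C D E hBC hDE hBE hCD hBD hCE)
  simp only [abs_mul] at key
  linear_combination dist x y ^ 4 * key

/-- Desargues'"'"' involution theorem for the complete quadrangle. -/
theorem desargues_involution_quadrangle
    (B C D E : Pt)
    (hBCD : ¬ Collinear ℝ ({B, C, D} : Set Pt))
    (hBCE : ¬ Collinear ℝ ({B, C, E} : Set Pt))
    (hBDE : ¬ Collinear ℝ ({B, D, E} : Set Pt))
    (hCDE : ¬ Collinear ℝ ({C, D, E} : Set Pt))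
    (Δ : AffineSubspace ℝ Pt) (hΔ : IsLine Δ)
    (hnpar : ∀ s ∈ sides B C D E, ¬ AffineSubspace.Parallel Δ s)
    (havoid : ∀ s₁ ∈ sides B C D E, ∀ s₂ ∈ sides B C D E, s₁ ≠ s₂ →
      ∀ X : Pt, X ∈ s₁ → X ∈ s₂ → X ∉ Δ)
    (I K P Q G H : Pt)
    (hI : I ∈ Δ ∧ I ∈ lineThrough B C)
    (hK : K ∈ Δ ∧ K ∈ lineThrough D E)
    (hP : P ∈ Δ ∧ P ∈ lineThrough B E)
    (hQ : Q ∈ Δ ∧ Q ∈ lineThrough C D)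
    (hG : G ∈ Δ ∧ G ∈ lineThrough B D)
    (hH : H ∈ Δ ∧ H ∈ lineThrough C E) :
    dist Q I * dist Q K * dist P G * dist P H
      = dist P I * dist P K * dist Q G * dist Q H :=
  desargues_involution_quadrangle_general B C D E hBCD hBCE hBDE Δ hΔ hnpar I K P Q G H hI hK hP hQ
    hG hH
end
end
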